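/- Under the model X_j = μ_j + Z_j with μ_j ∈ [a,b] i.i.d. from F₀ and Z_j i.i.d. N(0,1), the event B = {[a,b] ⊆ [X^{(3)}, X^{(N−2)}] and [X^{(1)}, X^{(N)}] ⊆ [a − √(8 log N), b + √(8 log N)]} satisfies P(B) ≥ 1 − 2·C(N,2)·Φ(b−a)^{N−2} − 1/(2N³√(π log N)) for N large enough. -/

import Mathlib

/-!
Since every `μ_j` lies in `[a, b]`, the event fails only if fewer than three `Z_j` are `≤ a - b`,
or fewer than three are `> b - a`, or some `|Z_j|` exceeds `t = √(8 log N)`. If at most two `Z_j`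
lie on one side, some `N - 2` of them all lie on the other, which by independence has probability
`Φ(b - a)^(N - 2)`; there are `C(N, 2)` choices of the exceptional pair. Mills' ratio
`P(Z > t) ≤ φ(t) / t` gives `P(|Z_j| > t) ≤ 1 / (2 N⁴ √(π log N))`, and a union bound over `j`
finishes.
-/

open MeasureTheory ProbabilityTheory

noncomputable def stdNormalPdf (z : ℝ) : ℝ :=
  (Real.sqrt (2 * Real.pi))⁻¹ * Real.exp (-z ^ 2 / 2)

noncomputable def stdNormalCdf (z : ℝ) : ℝ := ∫ t in Set.Iic z, stdNormalPdf t

open Set Real Filter Topology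
open scoped ENNReal Finset

lemma stdNormalPdf_eq_gaussianPDFReal : stdNormalPdf = gaussianPDFReal 0 1 := by
  ext x
  simp [stdNormalPdf, gaussianPDFReal, sq]

lemma stdNormalPdf_neg (x : ℝ) : stdNormalPdf (-x) = stdNormalPdf x := by
  simp [stdNormalPdf]

lemma stdNormalCdf_nonneg (x : ℝ) : 0 ≤ stdNormalCdf x :=
  setIntegral_nonneg measurableSet_Iic fun t _ => by
    rw [stdNormalPdf_eq_gaussianPDFReal]; exact gaussianPDFReal_nonneg _ _ _

lemma stdNormalCdf_neg (x : ℝ) : stdNormalCdf (-x) = ∫ t in Ioi x, stdNormalPdf t := by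
  simp_rw [stdNormalCdf, ← integral_comp_neg_Ioi, stdNormalPdf_neg]

lemma gaussianReal_Iic (x : ℝ) : gaussianReal 0 1 (Iic x) = ENNReal.ofReal (stdNormalCdf x) := by
  rw [gaussianReal_apply_eq_integral 0 one_ne_zero, stdNormalCdf, stdNormalPdf_eq_gaussianPDFReal]

lemma gaussianReal_Ioi (x : ℝ) :
    gaussianReal 0 1 (Ioi x) = ENNReal.ofReal (stdNormalCdf (-x)) := by
  rw [gaussianReal_apply_eq_integral 0 one_ne_zero, stdNormalCdf_neg,
    stdNormalPdf_eq_gaussianPDFReal]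

lemma gaussianReal_compl_Icc_le (t : ℝ) :
    gaussianReal 0 1 (Icc (-t) t)ᶜ ≤ ENNReal.ofReal (2 * stdNormalCdf (-t)) := by
  have h : (Icc (-t) t)ᶜ ⊆ Iic (-t) ∪ Ioi t := fun x hx =>
    (le_or_gt x t).elim (fun hxt => Or.inl (not_lt.1 fun h => hx ⟨h.le, hxt⟩)) Or.inr
  calc gaussianReal 0 1 (Icc (-t) t)ᶜ
      ≤ gaussianReal 0 1 (Iic (-t)) + gaussianReal 0 1 (Ioi t) :=
        (measure_mono h).trans (measure_union_le _ _)
    _ = ENNReal.ofReal (2 * stdNormalCdf (-t)) := by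
        rw [gaussianReal_Iic, gaussianReal_Ioi, two_mul,
          ENNReal.ofReal_add (stdNormalCdf_nonneg _) (stdNormalCdf_nonneg _)]

lemma hasDerivAt_stdNormalPdf (x : ℝ) : HasDerivAt stdNormalPdf (-(x * stdNormalPdf x)) x := by
  have h : HasDerivAt (fun x : ℝ => -x ^ 2 / 2) (-x) x := by
    refine ((hasDerivAt_pow 2 x).neg.div_const 2).congr_deriv ?_
    push_cast
    ring
  refine ((h.exp).const_mul (√(2 * π))⁻¹).congr_deriv ?_
  simp only [stdNormalPdf]
  ring

lemma tendsto_stdNormalPdf_atTop : Tendsto stdNormalPdf atTop (𝓝 0) := by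
  have h : Tendsto (fun x : ℝ => -x ^ 2 / 2) atTop atBot :=
    (tendsto_neg_atTop_atBot.comp (tendsto_pow_atTop two_ne_zero)).atBot_div_const two_pos
  have h' := (tendsto_exp_atBot.comp h).const_mul (√(2 * π))⁻¹
  rwa [mul_zero] at h'

lemma integrable_mul_stdNormalPdf : Integrable fun x => x * stdNormalPdf x := by
  have h := (integrable_mul_exp_neg_mul_sq (by norm_num : (0 : ℝ) < 1 / 2)).const_mul
    (√(2 * π))⁻¹
  refine h.congr (Eventually.of_forall fun x => ?_)
  simp only [stdNormalPdf]
  rw [show -(1 / 2) * x ^ 2 = -x ^ 2 / 2 by ring]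
  ring

lemma integral_Ioi_mul_stdNormalPdf (t : ℝ) :
    ∫ x in Ioi t, x * stdNormalPdf x = stdNormalPdf t := by
  have h := integral_Ioi_of_hasDerivAt_of_tendsto' (fun x _ => (hasDerivAt_stdNormalPdf x).neg)
    (by simpa only [neg_neg] using integrable_mul_stdNormalPdf.integrableOn (s := Ioi t))
    tendsto_stdNormalPdf_atTop.neg
  simpa using h

/-- Mills' ratio bound: on `(t, ∞)` the density is at most `x φ(x) / t`, and `x φ(x) = -φ'(x)`. -/
lemma stdNormalCdf_neg_le {t : ℝ} (ht : 0 < t) : stdNormalCdf (-t) ≤ stdNormalPdf t / t := by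
  rw [stdNormalCdf_neg, ← integral_Ioi_mul_stdNormalPdf, le_div_iff₀ ht, ← integral_mul_const]
  refine setIntegral_mono_on ?_ ?_ measurableSet_Ioi fun x hx => ?_
  · rw [stdNormalPdf_eq_gaussianPDFReal]
    exact ((integrable_gaussianPDFReal 0 1).mul_const t).integrableOn
  · exact integrable_mul_stdNormalPdf.integrableOn
  · have : 0 ≤ stdNormalPdf x := by
      rw [stdNormalPdf_eq_gaussianPDFReal]; exact gaussianPDFReal_nonneg _ _ _
    rw [mul_comm x]
    exact mul_le_mul_of_nonneg_left (le_of_lt hx) this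

lemma stdNormalCdf_neg_sqrt_eight_log_le {x : ℝ} (hx : 1 < x) :
    stdNormalCdf (-√(8 * log x)) ≤ 1 / (4 * x ^ 4 * √(π * log x)) := by
  have hlog : 0 < log x := log_pos hx
  have hx0 : 0 < x := one_pos.trans hx
  have hexp : exp (-√(8 * log x) ^ 2 / 2) = (x ^ 4)⁻¹ := by
    rw [sq_sqrt (by positivity), show -(8 * log x) / 2 = -((4 : ℕ) * log x) by push_cast; ring,
      exp_neg, exp_nat_mul, exp_log hx0]
  have hsqrt : √(8 * log x) * √(2 * π) = 4 * √(π * log x) := by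
    rw [← sqrt_mul (by positivity), show 8 * log x * (2 * π) = 4 ^ 2 * (π * log x) by ring,
      sqrt_mul (by positivity), sqrt_sq (by norm_num)]
  refine (stdNormalCdf_neg_le (by positivity)).trans (le_of_eq ?_)
  rw [stdNormalPdf, hexp, show 4 * x ^ 4 * √(π * log x) = x ^ 4 * (4 * √(π * log x)) by ring,
    ← hsqrt]
  field_simp

lemma natCast_mul_gaussianReal_compl_Icc_sqrt_log_le {N : ℕ} (hN : 2 ≤ N) :
    (N : ℝ≥0∞) * gaussianReal 0 1 (Icc (-√(8 * log N)) √(8 * log N))ᶜ ≤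
      ENNReal.ofReal (1 / (2 * (N : ℝ) ^ 3 * √(π * log N))) := by
  have hN1 : (1 : ℝ) < N := by exact_mod_cast hN
  have hN0 : (0 : ℝ) < N := one_pos.trans hN1
  have hlog : 0 < log N := log_pos hN1
  calc (N : ℝ≥0∞) * gaussianReal 0 1 (Icc (-√(8 * log N)) √(8 * log N))ᶜ
      ≤ N * ENNReal.ofReal (2 * stdNormalCdf (-√(8 * log N))) := by
        gcongr; exact gaussianReal_compl_Icc_le _
    _ = ENNReal.ofReal (N * (2 * stdNormalCdf (-√(8 * log N)))) := by
        rw [ENNReal.ofReal_mul hN0.le, ENNReal.ofReal_natCast]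
    _ ≤ ENNReal.ofReal (N * (2 * (1 / (4 * (N : ℝ) ^ 4 * √(π * log N))))) := by
        gcongr; exact stdNormalCdf_neg_sqrt_eight_log_le hN1
    _ = ENNReal.ofReal (1 / (2 * (N : ℝ) ^ 3 * √(π * log N))) := by
        congr 1
        field_simp
        ring

section IdenticallyDistributed

variable {Ω ι β : Type*} [MeasurableSpace Ω] [MeasurableSpace β] {P : Measure Ω}
  {ν : Measure β} {Z : ι → Ω → β} {s : Set β}

lemma measure_exists_notMem_le [Fintype ι] (hZm : ∀ j, Measurable (Z j))
    (hZ : ∀ j, P.map (Z j) = ν) (hs : MeasurableSet s) :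
    P {ω | ∃ j, Z j ω ∉ s} ≤ Fintype.card ι * ν sᶜ := by
  have hunion : {ω | ∃ j, Z j ω ∉ s} = ⋃ j, Z j ⁻¹' sᶜ := by ext; simp
  calc P {ω | ∃ j, Z j ω ∉ s} ≤ ∑ j, P (Z j ⁻¹' sᶜ) := hunion ▸ measure_iUnion_fintype_le _ _
    _ = Fintype.card ι * ν sᶜ := by
      simp_rw [← Measure.map_apply (hZm _) hs.compl, hZ, Finset.sum_const, nsmul_eq_mul,
        Finset.card_univ]

lemma ProbabilityTheory.iIndepFun.measure_biInter_preimage (hind : iIndepFun Z P)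
    (hZm : ∀ j, Measurable (Z j)) (hZ : ∀ j, P.map (Z j) = ν) (hs : MeasurableSet s)
    (T : Finset ι) : P (⋂ j ∈ T, Z j ⁻¹' s) = ν s ^ #T := by
  rw [hind.meas_biInter fun j _ => ⟨s, hs, rfl⟩]
  simp_rw [← Measure.map_apply (hZm _) hs, hZ, Finset.prod_const]

/-- If at most `k` of the `Z j` fall in `s`, then some `card ι - k` of them all fall in `sᶜ`. -/
lemma ProbabilityTheory.iIndepFun.measure_card_filter_mem_le [Fintype ι] (hind : iIndepFun Z P)
    (hZm : ∀ j, Measurable (Z j)) (hZ : ∀ j, P.map (Z j) = ν) (hs : MeasurableSet s)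
    [DecidablePred (· ∈ s)] {k : ℕ} (hk : k ≤ Fintype.card ι) :
    P {ω | #{j | Z j ω ∈ s} ≤ k} ≤
      (Fintype.card ι).choose k * ν sᶜ ^ (Fintype.card ι - k) := by
  classical
  have hcover : {ω | #{j | Z j ω ∈ s} ≤ k} ⊆
      ⋃ S ∈ Finset.powersetCard k Finset.univ, ⋂ j ∈ Sᶜ, Z j ⁻¹' sᶜ := by
    intro ω hω
    obtain ⟨S, hsub, hcard⟩ := Finset.exists_superset_card_eq hω (by simpa using hk)
    refine mem_iUnion₂.2 ⟨S, Finset.mem_powersetCard.2 ⟨S.subset_univ, hcard⟩, ?_⟩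
    refine mem_iInter₂.2 fun j hj hjs => Finset.mem_compl.1 hj (hsub ?_)
    exact Finset.mem_filter.2 ⟨Finset.mem_univ j, hjs⟩
  calc P {ω | #{j | Z j ω ∈ s} ≤ k}
      ≤ ∑ S ∈ Finset.powersetCard k Finset.univ, P (⋂ j ∈ Sᶜ, Z j ⁻¹' sᶜ) :=
        (measure_mono hcover).trans (measure_biUnion_finset_le _ _)
    _ = (Fintype.card ι).choose k * ν sᶜ ^ (Fintype.card ι - k) := by
      rw [Finset.sum_congr rfl fun S hS => by
        rw [hind.measure_biInter_preimage hZm hZ hs.compl, Finset.card_compl,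
          (Finset.mem_powersetCard.1 hS).2]]
      rw [Finset.sum_const, nsmul_eq_mul, Finset.card_powersetCard, Finset.card_univ]

end IdenticallyDistributed

lemma ofReal_one_sub_le_of_measure_compl_le {Ω : Type*} [MeasurableSpace Ω] {P : Measure Ω}
    [IsProbabilityMeasure P] {s : Set Ω} {c : ℝ} (hc : 0 ≤ c) (h : P sᶜ ≤ ENNReal.ofReal c) :
    ENNReal.ofReal (1 - c) ≤ P s := by
  rw [ENNReal.ofReal_sub _ hc, ENNReal.ofReal_one, tsub_le_iff_right]
  calc 1 = P (s ∪ sᶜ) := by rw [union_compl_self, measure_univ]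
    _ ≤ P s + P sᶜ := measure_union_le _ _
    _ ≤ P s + ENNReal.ofReal c := by gcongr

lemma localization_of_noise {ι : Type*} [Fintype ι] {a b t : ℝ} {μ z : ι → ℝ}
    (hμ : ∀ j, μ j ∈ Icc a b) (hlow : 2 < #{j | z j ∈ Iic (a - b)})
    (hhigh : 2 < #{j | z j ∈ Ioi (b - a)}) (hbdd : ∀ j, z j ∈ Icc (-t) t) :
    3 ≤ #{j | μ j + z j ≤ a} ∧ 3 ≤ #{j | b ≤ μ j + z j} ∧
      ∀ j, a - t ≤ μ j + z j ∧ μ j + z j ≤ b + t := by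
  refine ⟨hlow.trans_le (Finset.card_le_card (Finset.monotone_filter_right _ fun j _ hj => ?_)),
    hhigh.trans_le (Finset.card_le_card (Finset.monotone_filter_right _ fun j _ hj => ?_)),
    fun j => ⟨?_, ?_⟩⟩
  · linarith [(hμ j).2, show z j ≤ a - b from hj]
  · linarith [(hμ j).1, show b - a < z j from hj]
  · linarith [(hμ j).1, (hbdd j).1]
  · linarith [(hμ j).2, (hbdd j).2]

/-- `[a,b] ⊆ [X^{(3)}, X^{(N−2)}]` is encoded as: at least three `X_j` are `≤ a` and at least
three are `≥ b`. -/
theorem stmt9_general (a b : ℝ) :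
    ∃ N₀ : ℕ, ∀ N, N₀ ≤ N →
      ∀ {Ω : Type} [MeasurableSpace Ω] (P : Measure Ω), IsProbabilityMeasure P →
        ∀ (Z : Fin N → Ω → ℝ), (∀ j, Measurable (Z j)) →
          (∀ j, Measure.map (Z j) P = gaussianReal 0 1) →
          iIndepFun Z P →
          ∀ (μs : Fin N → Ω → ℝ), (∀ j, Measurable (μs j)) →
            (∀ j, ∀ᵐ ω ∂P, μs j ω ∈ Set.Icc a b) →
            (∀ j, IndepFun (μs j) (Z j) P) →
            ENNReal.ofReal
                (1 - 2 * (N.choose 2 : ℝ) * stdNormalCdf (b - a) ^ (N - 2)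
                  - 1 / (2 * (N : ℝ) ^ 3 * Real.sqrt (Real.pi * Real.log N)))
              ≤ P {ω |
                  3 ≤ (Finset.univ.filter fun j => μs j ω + Z j ω ≤ a).card ∧
                  3 ≤ (Finset.univ.filter fun j => b ≤ μs j ω + Z j ω).card ∧
                  ∀ j, a - Real.sqrt (8 * Real.log N) ≤ μs j ω + Z j ω ∧
                    μs j ω + Z j ω ≤ b + Real.sqrt (8 * Real.log N)} := by
  refine ⟨2, fun N hN Ω _ P _ Z hZm hZ hind μs _ hμs _ => ?_⟩
  have hk : 2 ≤ Fintype.card (Fin N) := by simpa using hN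
  have hΦ := stdNormalCdf_nonneg (b - a)
  have hlow : P {ω | #{j | Z j ω ∈ Iic (a - b)} ≤ 2} ≤
      ENNReal.ofReal ((N.choose 2 : ℝ) * stdNormalCdf (b - a) ^ (N - 2)) := by
    refine (hind.measure_card_filter_mem_le hZm hZ measurableSet_Iic hk).trans_eq ?_
    rw [compl_Iic, gaussianReal_Ioi, neg_sub, Fintype.card_fin, ← ENNReal.ofReal_pow hΦ,
      ← ENNReal.ofReal_natCast, ← ENNReal.ofReal_mul (by positivity)]
  have hhigh : P {ω | #{j | Z j ω ∈ Ioi (b - a)} ≤ 2} ≤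
      ENNReal.ofReal ((N.choose 2 : ℝ) * stdNormalCdf (b - a) ^ (N - 2)) := by
    refine (hind.measure_card_filter_mem_le hZm hZ measurableSet_Ioi hk).trans_eq ?_
    rw [compl_Ioi, gaussianReal_Iic, Fintype.card_fin, ← ENNReal.ofReal_pow hΦ,
      ← ENNReal.ofReal_natCast, ← ENNReal.ofReal_mul (by positivity)]
  have hout := measure_exists_notMem_le hZm hZ (measurableSet_Icc (a := -√(8 * log N))
    (b := √(8 * log N)))
  rw [Fintype.card_fin] at hout
  rw [sub_sub, mul_assoc, two_mul]
  refine ofReal_one_sub_le_of_measure_compl_le (by positivity) ?_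
  rw [ENNReal.ofReal_add (by positivity) (by positivity),
    ENNReal.ofReal_add (by positivity) (by positivity)]
  refine (measure_mono_ae ?_).trans ((measure_union_le _ _).trans
    (add_le_add ((measure_union_le _ _).trans (add_le_add hlow hhigh))
    (hout.trans (natCast_mul_gaussianReal_compl_Icc_sqrt_log_le hN))))
  filter_upwards [ae_all_iff.2 hμs] with ω hω hB
  by_contra h
  exact hB (localization_of_noise hω (lt_of_not_ge fun h1 => h (Or.inl (Or.inl h1)))
    (lt_of_not_ge fun h2 => h (Or.inl (Or.inr h2))) fun j => by_contra fun hj => h (Or.inr ⟨j, hj⟩))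

/-- for `N` large enough, the localization event
`B = {[a,b] ⊆ [X^{(3)}, X^{(N−2)}]` and `[X^{(1)}, X^{(N)}] ⊆ [a − √(8 log N), b + √(8 log N)]}`
(equivalently: at least 3 of the `X_j` are `≤ a`, at least 3 are `≥ b`, and every `X_j`
lies in `[a − √(8 log N), b + √(8 log N)]`) satisfies
`P(B) ≥ 1 − 2 C(N,2) Φ(b−a)^{N−2} − 1/(2N³√(π log N))`. -/
theorem stmt9 (a b : ℝ) (hab : a ≤ b) :
    ∃ N₀ : ℕ, ∀ N, N₀ ≤ N →
      ∀ {Ω : Type} [MeasurableSpace Ω] (P : Measure Ω), IsProbabilityMeasure P →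
        ∀ (Z : Fin N → Ω → ℝ), (∀ j, Measurable (Z j)) →
          (∀ j, Measure.map (Z j) P = gaussianReal 0 1) →
          iIndepFun Z P →
          ∀ (μs : Fin N → Ω → ℝ), (∀ j, Measurable (μs j)) →
            (∀ j, ∀ᵐ ω ∂P, μs j ω ∈ Set.Icc a b) →
            (∀ j, IndepFun (μs j) (Z j) P) →
            ENNReal.ofReal
                (1 - 2 * (N.choose 2 : ℝ) * stdNormalCdf (b - a) ^ (N - 2)
                  - 1 / (2 * (N : ℝ) ^ 3 * Real.sqrt (Real.pi * Real.log N)))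
              ≤ P {ω |
                  3 ≤ (Finset.univ.filter fun j => μs j ω + Z j ω ≤ a).card ∧
                  3 ≤ (Finset.univ.filter fun j => b ≤ μs j ω + Z j ω).card ∧
                  ∀ j, a - Real.sqrt (8 * Real.log N) ≤ μs j ω + Z j ω ∧
                    μs j ω + Z j ω ≤ b + Real.sqrt (8 * Real.log N)} :=
  stmt9_general a b
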